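/- arXiv:2411.17397 — 7 statements merged into one kernel-verified Lean document; each statement's English description precedes it below -/
import Mathlib

section
/- The rational map T(a,b,c) = ((1+a+ab)/(b(1+c+ac)), (1+b+bc)/(c(1+a+ab)), (1+c+ac)/(a(1+b+bc))) is an involution: T(T(a,b,c)) = (a,b,c) wherever both sides are defined. -/
/-- The rational map realizing Okamoto's symmetry `w₂` on cluster X-coordinates. -/
def okamotoT {F : Type*} [Field F] (t : F × F × F) : F × F × F :=
  ⟨(1 + t.1 + t.1 * t.2.1) / (t.2.1 * (1 + t.2.2 + t.1 * t.2.2)),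
   (1 + t.2.1 + t.2.1 * t.2.2) / (t.2.2 * (1 + t.1 + t.1 * t.2.1)),
   (1 + t.2.2 + t.1 * t.2.2) / (t.1 * (1 + t.2.1 + t.2.1 * t.2.2))⟩

/-!
Write `P = 1 + a + ab`, `Q = 1 + b + bc`, `R = 1 + c + ca`, so that
`(x, y, z) = T(a, b, c) = (P / (bR), Q / (cP), R / (aQ))`. The polynomial identities
`bcR + cP + Q = QR` and `abQ + bR + P = PQ` say that `1 + x + xy = Q / (bc)` and
`1 + z + zx = P / (ab)`, hence `(1 + x + xy) / (y (1 + z + zx)) = a`. Since `T` commutes with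
the cyclic rotation `(a, b, c) ↦ (b, c, a)`, the other two coordinates follow from the first.
-/

namespace Okamoto

variable {F : Type*} [Field F]

def cycle (t : F × F × F) : F × F × F := (t.2.1, t.2.2, t.1)

theorem okamotoT_cycle (t : F × F × F) : okamotoT (cycle t) = cycle (okamotoT t) := by
  simp only [okamotoT, cycle, Prod.mk.injEq]
  refine ⟨?_, ?_, ?_⟩ <;> ring

theorem okamotoT_okamotoT_cycle (t : F × F × F) :
    okamotoT (okamotoT (cycle t)) = cycle (okamotoT (okamotoT t)) := by
  rw [okamotoT_cycle, okamotoT_cycle]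

theorem okamotoT_okamotoT_fst {a b c : F} (ha : a ≠ 0) (hb : b ≠ 0) (hc : c ≠ 0)
    (hP : 1 + a + a * b ≠ 0) (hQ : 1 + b + b * c ≠ 0) (hR : 1 + c + c * a ≠ 0) :
    (okamotoT (okamotoT (a, b, c))).1 = a := by
  -- `field_simp` needs each factor with its product written in both orders
  have hP' : 1 + a + b * a ≠ 0 := by rwa [mul_comm]
  have hQ' : 1 + b + c * b ≠ 0 := by rwa [mul_comm]
  have hR' : 1 + c + a * c ≠ 0 := by rwa [mul_comm]
  set x := (okamotoT (a, b, c)).1 with hx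
  set y := (okamotoT (a, b, c)).2.1 with hy
  set z := (okamotoT (a, b, c)).2.2 with hz
  have hxy : 1 + x + x * y = (1 + b + b * c) / (b * c) := by
    simp only [hx, hy, okamotoT]
    field_simp
    ring
  have hzx : 1 + z + x * z = (1 + a + a * b) / (a * b) := by
    simp only [hx, hz, okamotoT]
    field_simp
    ring
  show (1 + x + x * y) / (y * (1 + z + x * z)) = a
  rw [hxy, hzx, hy]
  simp only [okamotoT]
  field_simp

end Okamoto

open Okamoto in
theorem stmt3_general {F : Type*} [Field F] (a b c : F) (ha : a ≠ 0) (hb : b ≠ 0) (hc : c ≠ 0)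
    (h1 : 1 + a + a * b ≠ 0) (h2 : 1 + b + b * c ≠ 0) (h3 : 1 + c + a * c ≠ 0) :
    okamotoT (okamotoT (a, b, c)) = (a, b, c) := by
  have h3' : 1 + c + c * a ≠ 0 := by rwa [mul_comm]
  refine Prod.ext (okamotoT_okamotoT_fst ha hb hc h1 h2 h3') (Prod.ext ?_ ?_)
  · calc (okamotoT (okamotoT (a, b, c))).2.1
        = (okamotoT (okamotoT (cycle (a, b, c)))).1 := by rw [okamotoT_okamotoT_cycle]; rfl
      _ = b := okamotoT_okamotoT_fst hb hc ha h2 h3' h1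
  · calc (okamotoT (okamotoT (a, b, c))).2.2
        = (okamotoT (okamotoT (cycle (cycle (a, b, c))))).1 := by
          rw [okamotoT_okamotoT_cycle, okamotoT_okamotoT_cycle]; rfl
      _ = c := okamotoT_okamotoT_fst hc ha hb h3' h1 h2

theorem stmt3 {F : Type*} [Field F] (a b c : F) (ha : a ≠ 0) (hb : b ≠ 0) (hc : c ≠ 0)
    (h1 : 1 + a + a * b ≠ 0) (h2 : 1 + b + b * c ≠ 0) (h3 : 1 + c + a * c ≠ 0)
    (ha' : (okamotoT (a, b, c)).1 ≠ 0) (hb' : (okamotoT (a, b, c)).2.1 ≠ 0)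
    (hc' : (okamotoT (a, b, c)).2.2 ≠ 0)
    (h1' : 1 + (okamotoT (a, b, c)).1 + (okamotoT (a, b, c)).1 * (okamotoT (a, b, c)).2.1 ≠ 0)
    (h2' : 1 + (okamotoT (a, b, c)).2.1 +
      (okamotoT (a, b, c)).2.1 * (okamotoT (a, b, c)).2.2 ≠ 0)
    (h3' : 1 + (okamotoT (a, b, c)).2.2 +
      (okamotoT (a, b, c)).1 * (okamotoT (a, b, c)).2.2 ≠ 0) :
    okamotoT (okamotoT (a, b, c)) = (a, b, c) :=
  stmt3_general a b c ha hb hc h1 h2 h3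
end

section
/- Consider the 3-cycle quiver on vertices O, B, G with arrows O→B→G→O and cluster A-coordinates (C_O, C_B, C_G), with A-mutation μ_k*(A'_k) = (∏_{ε_{kj}>0} A_j^{ε_{kj}} + ∏_{ε_{kj}<0} A_j^{−ε_{kj}})/A_k and μ_k*(A'_i) = A_i for i ≠ k. The composition μ_O μ_G μ_B μ_O maps (C_O, C_B, C_G) to ((C_O+C_B+C_G)/(C_B C_G), (C_O+C_B+C_G)/(C_O C_B), (C_O+C_B+C_G)/(C_O C_G)); consequently, after the permutation swapping the B and G coordinates, the ratios C_G/C_B, C_O/C_G, C_B/C_O are all invariant under the full cluster transformation. -/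
/-- Standard mutation of a skew-symmetric exchange matrix at vertex `k`. -/
def epsMut {n : Type*} [DecidableEq n] (ε : n → n → ℤ) (k : n) : n → n → ℤ :=
  fun i j => if i = k ∨ j = k then -ε i j
    else ε i j + (|ε i k| * ε k j + ε i k * |ε k j|) / 2

/-- Cluster A-mutation at vertex `k`. -/
def aMut {F : Type*} [Field F] {n : Type*} [Fintype n] [DecidableEq n]
    (ε : n → n → ℤ) (k : n) (A : n → F) : n → F :=
  fun i => if i = k then
    ((∏ j, A j ^ (ε k j).toNat) + ∏ j, A j ^ (-(ε k j)).toNat) / A k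
  else A i

/-- One seed-mutation step on A-coordinates. -/
def aStep {F : Type*} [Field F] {n : Type*} [Fintype n] [DecidableEq n]
    (s : (n → n → ℤ) × (n → F)) (k : n) : (n → n → ℤ) × (n → F) :=
  (epsMut s.1 k, aMut s.1 k s.2)

/-!
Mutation at `O` removes the arrow `B → G`, so the following mutations at `B` and `G` each see
only the vertex `O` and give `A' = (A_O + 1) / A` with `A_O = (C_B + C_G) / C_O`. The final
mutation at `O` then returns `(A_B + A_G) / A_O = (C_O + C_B + C_G) / (C_B C_G)`, and every new
coordinate is `C_O + C_B + C_G` over a product of two old ones, whence the ratios.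
-/

section aMut

variable {F : Type*} [Field F] {n : Type*} [Fintype n] [DecidableEq n]

@[simp]
lemma aMut_apply_self (ε : n → n → ℤ) (k : n) (A : n → F) :
    aMut ε k A k = ((∏ j, A j ^ (ε k j).toNat) + ∏ j, A j ^ (-(ε k j)).toNat) / A k :=
  if_pos rfl

@[simp]
lemma aMut_apply_of_ne (ε : n → n → ℤ) {k i : n} (h : i ≠ k) (A : n → F) :
    aMut ε k A i = A i :=
  if_neg h

end aMut

/-- The exchange matrix of the oriented 3-cycle `O → B → G → O`, with `O, B, G = 0, 1, 2`. -/
def cycleExchange : Fin 3 → Fin 3 → ℤ := ![![0, 1, -1], ![-1, 0, 1], ![1, -1, 0]]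

section cycleExchange

variable {F : Type*} [Field F]

lemma foldl_aStep_cycleExchange (C : Fin 3 → F) :
    (List.foldl aStep (cycleExchange, C) [0, 1, 2, 0]).2 =
      aMut ![![0, 1, -1], ![-1, 0, 0], ![1, 0, 0]] 0
        (aMut ![![0, 1, 1], ![-1, 0, 0], ![-1, 0, 0]] 2
          (aMut ![![0, -1, 1], ![1, 0, 0], ![-1, 0, 0]] 1 (aMut cycleExchange 0 C))) := by
  have hO : epsMut cycleExchange 0 = ![![0, -1, 1], ![1, 0, 0], ![-1, 0, 0]] := by decide
  have hB : epsMut ![![0, -1, 1], ![1, 0, 0], ![-1, 0, 0]] 1 =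
      ![![0, 1, 1], ![-1, 0, 0], ![-1, 0, 0]] := by decide
  have hG : epsMut ![![0, 1, 1], ![-1, 0, 0], ![-1, 0, 0]] 2 =
      ![![0, 1, -1], ![-1, 0, 0], ![1, 0, 0]] := by decide
  simp only [List.foldl_cons, List.foldl_nil, aStep, hO, hB, hG]

lemma aMut_cycleExchange_zero (C : Fin 3 → F) :
    aMut cycleExchange 0 C = ![(C 1 + C 2) / C 0, C 1, C 2] := by
  ext i; fin_cases i <;> simp [cycleExchange, Fin.prod_univ_three]

lemma aMut_one_of_arrow_one_zero (a b c : F) :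
    aMut ![![0, -1, 1], ![1, 0, 0], ![-1, 0, 0]] 1 ![a, b, c] = ![a, (a + 1) / b, c] := by
  ext i; fin_cases i <;> simp [Fin.prod_univ_three]

lemma aMut_two_of_arrow_zero_two (a b c : F) :
    aMut ![![0, 1, 1], ![-1, 0, 0], ![-1, 0, 0]] 2 ![a, b, c] = ![a, b, (1 + a) / c] := by
  ext i; fin_cases i <;> simp [Fin.prod_univ_three]

lemma aMut_zero_of_arrows_zero_one_two_zero (a b c : F) :
    aMut ![![0, 1, -1], ![-1, 0, 0], ![1, 0, 0]] 0 ![a, b, c] = ![(b + c) / a, b, c] := by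
  ext i; fin_cases i <;> simp [Fin.prod_univ_three]

lemma foldl_aStep_cycleExchange_eq (C : Fin 3 → F) (h0 : C 0 ≠ 0) (h1 : C 1 ≠ 0)
    (h2 : C 2 ≠ 0) (h3 : C 1 + C 2 ≠ 0) :
    (List.foldl aStep (cycleExchange, C) [0, 1, 2, 0]).2 =
      ![(C 0 + C 1 + C 2) / (C 1 * C 2), (C 0 + C 1 + C 2) / (C 0 * C 1),
        (C 0 + C 1 + C 2) / (C 0 * C 2)] := by
  rw [foldl_aStep_cycleExchange, aMut_cycleExchange_zero, aMut_one_of_arrow_one_zero,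
    aMut_two_of_arrow_zero_two, aMut_zero_of_arrows_zero_one_two_zero]
  simp only [Matrix.vecCons_inj, and_true]
  refine ⟨?_, ?_, ?_⟩ <;> field_simp <;> ring

end cycleExchange

theorem stmt10 {F : Type*} [Field F] (C : Fin 3 → F)
    (h0 : C 0 ≠ 0) (h1 : C 1 ≠ 0) (h2 : C 2 ≠ 0)
    (h3 : C 1 + C 2 ≠ 0) (h4 : C 0 + C 1 + C 2 ≠ 0) :
    let ε : Fin 3 → Fin 3 → ℤ := fun i j => !![0, 1, -1; -1, 0, 1; 1, -1, 0] i j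
    let D := (List.foldl aStep (ε, C) [0, 1, 2, 0]).2
    (D 0 = (C 0 + C 1 + C 2) / (C 1 * C 2) ∧
     D 1 = (C 0 + C 1 + C 2) / (C 0 * C 1) ∧
     D 2 = (C 0 + C 1 + C 2) / (C 0 * C 2)) ∧
    -- after swapping the B and G coordinates, the three ratios are invariant
    (D 1 / D 2 = C 2 / C 1 ∧ D 0 / D 1 = C 0 / C 2 ∧ D 2 / D 0 = C 1 / C 0) := by
  intro ε D
  -- `ε` is `cycleExchange` once `Matrix.of` is unfolded
  have hD : D = _ := foldl_aStep_cycleExchange_eq C h0 h1 h2 h3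
  simp only [hD, Matrix.cons_val_zero, Matrix.cons_val_one, Matrix.cons_val_two,
    Matrix.head_cons, Matrix.tail_cons, true_and]
  refine ⟨?_, ?_, ?_⟩ <;> field_simp
end

section
/- Let A₁,…,A_p be n×n complex matrices, μ ∈ ℂ with μ ≠ 0, and let B_i be the np×np block matrix whose i-th block row is (A₁, …, A_{i−1}, A_i + μ·𝟙, A_{i+1}, …, A_p) and all other block rows zero. Then the subspace L = ⋂_{i=1}^p ker(B_i) equals ker(B₁ + ⋯ + B_p) and equals the set of vectors (v, v, …, v) (diagonal embedding) with v ∈ ker(A₁ + ⋯ + A_p + μ·𝟙). -/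
open Matrix

theorem stmt12 (p n : ℕ) (A : Fin p → Matrix (Fin n) (Fin n) ℂ) (μ : ℂ) (hμ : μ ≠ 0) :
    let B : Fin p → Matrix (Fin p × Fin n) (Fin p × Fin n) ℂ := fun i =>
      Matrix.of fun q q' =>
        if q.1 = i then A q'.1 q.2 q'.2 + (if q'.1 = i ∧ q.2 = q'.2 then μ else 0) else 0
    ({x : Fin p × Fin n → ℂ | ∀ i, (B i).mulVec x = 0} =
      {x : Fin p × Fin n → ℂ | (∑ i, B i).mulVec x = 0}) ∧
    ({x : Fin p × Fin n → ℂ | ∀ i, (B i).mulVec x = 0} =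
      {x : Fin p × Fin n → ℂ | ∃ v : Fin n → ℂ,
        ((∑ k, A k) + μ • (1 : Matrix (Fin n) (Fin n) ℂ)).mulVec v = 0 ∧
        x = fun q => v q.2}) := by
  intro B
  set T : (Fin p × Fin n → ℂ) → Fin n → ℂ :=
    fun x j => ∑ q' : Fin p × Fin n, A q'.1 j q'.2 * x q' with hT
  have hTpair : ∀ x j, T x j = ∑ k : Fin p, ∑ m : Fin n, A k j m * x (k, m) :=
    fun x j => Fintype.sum_prod_type _
  have hB : ∀ i x (q : Fin p × Fin n), (B i).mulVec x q =
      if q.1 = i then T x q.2 + μ * x (i, q.2) else 0 := by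
    intro i x q
    simp only [B, Matrix.mulVec, dotProduct, Matrix.of_apply]
    by_cases h : q.1 = i
    · simp only [h, if_true, hT, add_mul, Finset.sum_add_distrib]
      congr 1
      rw [Finset.sum_eq_single (i, q.2)]
      · simp
      · intro b _ hb
        rcases b with ⟨b1, b2⟩
        by_cases h1 : b1 = i
        · have h2 : q.2 ≠ b2 := by
            intro h2; exact hb (by simp [h1, ← h2])
          simp [h2]
        · simp [h1]
      · simp
    · simp [h]
  have hker : ∀ x : Fin p × Fin n → ℂ,
      (∀ i, (B i).mulVec x = 0) ↔ ∀ (i : Fin p) (j : Fin n), T x j + μ * x (i, j) = 0 := by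
    intro x
    constructor
    · intro h i j
      have := congrFun (h i) (i, j)
      simpa [hB] using this
    · intro h i
      funext q
      rw [hB]
      by_cases hq : q.1 = i
      · simpa [hq] using h i q.2
      · simp [hq]
  have hsum : ∀ x (q : Fin p × Fin n), (∑ i, B i).mulVec x q = T x q.2 + μ * x q := by
    intro x q
    have h1 : ((∑ i, B i).mulVec x) q = ∑ i, ((B i).mulVec x) q := by
      simp only [Matrix.mulVec, dotProduct, Matrix.sum_apply, Finset.sum_mul]
      exact Finset.sum_comm
    rw [h1]
    simp only [hB]
    rw [Finset.sum_ite_eq Finset.univ q.1 (fun i => T x q.2 + μ * x (i, q.2))]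
    simp
  constructor
  · ext x
    simp only [Set.mem_setOf_eq, hker]
    constructor
    · intro h
      funext q
      rw [hsum]
      simpa using h q.1 q.2
    · intro h i j
      have := congrFun h (i, j)
      rw [hsum] at this
      simpa using this
  · ext x
    simp only [Set.mem_setOf_eq, hker]
    have hmv : ∀ v : Fin n → ℂ, ∀ j,
        ((∑ k, A k) + μ • (1 : Matrix (Fin n) (Fin n) ℂ)).mulVec v j =
          (∑ k, ∑ m, A k j m * v m) + μ * v j := by
      intro v j
      rw [Matrix.add_mulVec, Matrix.smul_mulVec, Matrix.one_mulVec]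
      simp only [Pi.add_apply, Pi.smul_apply, smul_eq_mul, Matrix.mulVec, dotProduct,
        Matrix.sum_apply, Finset.sum_mul]
      rw [Finset.sum_comm]
    constructor
    · intro h
      rcases Nat.eq_zero_or_pos p with hp | hp
      · refine ⟨0, Matrix.mulVec_zero _, ?_⟩
        funext q
        exact absurd q.1.isLt (by omega)
      · set i0 : Fin p := ⟨0, hp⟩
        have hconst : ∀ (k : Fin p) (m : Fin n), x (k, m) = x (i0, m) := by
          intro k m
          have h1 := h k m
          have h2 := h i0 m
          have h3 : μ * x (k, m) = μ * x (i0, m) := by linear_combination h1 - h2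
          exact mul_left_cancel₀ hμ h3
        refine ⟨fun j => x (i0, j), ?_, ?_⟩
        · funext j
          rw [hmv]
          have h0 := h i0 j
          rw [hTpair] at h0
          simp only [hconst] at h0
          simpa using h0
        · funext q
          exact hconst q.1 q.2
    · rintro ⟨v, hv, rfl⟩
      intro i j
      have h0 := congrFun hv j
      rw [hmv] at h0
      simp only [Pi.zero_apply] at h0
      rw [hTpair]
      simpa using h0
end

section
/- Let M₁,…,M_p ∈ GL(V) and ν ∈ ℂ* with ν ≠ 1, and let N_i ∈ GL(V^p) be the convolution matrices: N_i equals the identity except in its i-th block row, which is (ν(M₁−𝟙), …, ν(M_{i−1}−𝟙), νM_i, M_{i+1}−𝟙, …, M_p−𝟙). Then the subspace L = ⋂_{i=1}^p ker(N_i − 𝟙) equals ker(N₁N₂⋯N_p − 𝟙) and equals the span of the vectors (M₂⋯M_p v, M₃⋯M_p v, …, M_p v, v) with v ∈ ker(νM₁⋯M_p − 𝟙). -/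
open Matrix Finset

variable {p n : ℕ} (M : Fin p → Matrix (Fin n) (Fin n) ℂ) (ν : ℂ)

noncomputable def Nmat (i : Fin p) : Matrix (Fin p × Fin n) (Fin p × Fin n) ℂ :=
  Matrix.of fun q q' =>
    if q.1 = i then
      (if q'.1 < i then ν * (M q'.1 q.2 q'.2 - (if q.2 = q'.2 then 1 else 0))
       else if q'.1 = i then ν * M i q.2 q'.2
       else M q'.1 q.2 q'.2 - (if q.2 = q'.2 then 1 else 0))
    else (if q = q' then 1 else 0)

lemma delta_sum {n : ℕ} (b : Fin n) (f : Fin n → ℂ) :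
    ∑ a, (if b = a then (1:ℂ) else 0) * f a = f b := by
  simp [ite_mul]

lemma row_ne (i : Fin p) (x : Fin p × Fin n → ℂ) (q : Fin p × Fin n) (hq : q.1 ≠ i) :
    (Nmat M ν i).mulVec x q = x q := by
  simp only [Matrix.mulVec, dotProduct, Nmat, Matrix.of_apply, if_neg hq, ite_mul, one_mul,
    zero_mul]
  simp [Finset.sum_ite_eq]

lemma row_eq (i : Fin p) (x : Fin p × Fin n → ℂ) (b : Fin n) :
    (Nmat M ν i).mulVec x (i, b) =
    ∑ j : Fin p, (if j < i then ν * ((M j).mulVec (fun a => x (j,a)) b - x (j,b))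
      else if j = i then ν * (M i).mulVec (fun a => x (i,a)) b
      else ((M j).mulVec (fun a => x (j,a)) b - x (j,b))) := by
  simp only [Matrix.mulVec, dotProduct, Nmat, Matrix.of_apply]
  rw [show ∑ q' : Fin p × Fin n, _ = _ from Fintype.sum_prod_type _]
  refine Finset.sum_congr rfl fun j _ => ?_
  simp only [if_pos rfl, if_true]
  by_cases hj : j < i
  · simp only [if_pos hj]
    have : ∀ a, (ν * (M j b a - if b = a then 1 else 0)) * x (j, a)
        = ν * (M j b a * x (j, a)) - ν * ((if b = a then (1:ℂ) else 0) * x (j, a)) := by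
      intro a; ring
    rw [Finset.sum_congr rfl fun a _ => this a, Finset.sum_sub_distrib, ← Finset.mul_sum,
      ← Finset.mul_sum, delta_sum, ← mul_sub]
  · by_cases hji : j = i
    · subst hji
      simp [Finset.mul_sum, mul_assoc, Matrix.mulVec, dotProduct]
    · simp only [if_neg hj, if_neg hji]
      have : ∀ a, (M j b a - if b = a then 1 else 0) * x (j, a)
          = M j b a * x (j, a) - (if b = a then (1:ℂ) else 0) * x (j, a) := by
        intro a; ring
      rw [Finset.sum_congr rfl fun a _ => this a, Finset.sum_sub_distrib, delta_sum]

noncomputable def Pm (k : ℕ) : Matrix (Fin p × Fin n) (Fin p × Fin n) ℂ :=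
  ((List.ofFn (Nmat M ν)).drop k).prod

lemma Pm_ge (k : ℕ) (hk : p ≤ k) : Pm M ν k = 1 := by
  unfold Pm
  rw [List.drop_eq_nil_of_le (by simpa using hk), List.prod_nil]

lemma Pm_succ (k : ℕ) (hk : k < p) :
    Pm M ν k = Nmat M ν ⟨k, hk⟩ * Pm M ν (k + 1) := by
  unfold Pm
  rw [List.drop_eq_getElem_cons (by simpa using hk), List.prod_cons, List.getElem_ofFn]

lemma Pm_agree : ∀ t k, p ≤ k + t → ∀ (x : Fin p × Fin n → ℂ) (q : Fin p × Fin n),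
    q.1.1 < k → (Pm M ν k).mulVec x q = x q := by
  intro t
  induction t with
  | zero => intro k hk x q _; rw [Pm_ge M ν k (by omega), Matrix.one_mulVec]
  | succ t ih =>
    intro k hk x q hq
    by_cases hkp : p ≤ k
    · rw [Pm_ge M ν k hkp, Matrix.one_mulVec]
    · push_neg at hkp
      rw [Pm_succ M ν k hkp, ← Matrix.mulVec_mulVec,
        row_ne M ν _ _ q (by simp [Fin.ext_iff]; omega)]
      exact ih (k+1) (by omega) x q (by omega)

lemma Pm_back (x : Fin p × Fin n → ℂ) (h : ∀ i, (Nmat M ν i).mulVec x = x) :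
    ∀ t k, p ≤ k + t → (Pm M ν k).mulVec x = x := by
  intro t
  induction t with
  | zero => intro k hk; rw [Pm_ge M ν k (by omega), Matrix.one_mulVec]
  | succ t ih =>
    intro k hk
    by_cases hkp : p ≤ k
    · rw [Pm_ge M ν k hkp, Matrix.one_mulVec]
    · push_neg at hkp
      rw [Pm_succ M ν k hkp, ← Matrix.mulVec_mulVec, ih (k+1) (by omega)]
      exact h _

lemma Pm_fwd (x : Fin p × Fin n → ℂ) (h0 : (Pm M ν 0).mulVec x = x) :
    ∀ k, k ≤ p → (Pm M ν k).mulVec x = x := by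
  intro k
  induction k with
  | zero => intro _; exact h0
  | succ k ih =>
    intro hk
    have hkp : k < p := by omega
    have hPk := ih (le_of_lt hkp)
    funext q
    by_cases hq : q.1.1 < k + 1
    · exact Pm_agree M ν (p - (k+1)) (k+1) (by omega) x q hq
    · have h2 : (Pm M ν k).mulVec x q = x q := congrFun hPk q
      rw [Pm_succ M ν k hkp, ← Matrix.mulVec_mulVec,
        row_ne M ν _ _ q (by simp [Fin.ext_iff]; omega)] at h2
      exact h2

lemma fixed_iff (x : Fin p × Fin n → ℂ) :
    (∀ i, (Nmat M ν i).mulVec x = x) ↔ ((List.ofFn (Nmat M ν)).prod).mulVec x = x := by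
  constructor
  · intro h
    have := Pm_back M ν x h p 0 (by omega)
    simpa [Pm] using this
  · intro h
    have h0 : (Pm M ν 0).mulVec x = x := by simpa [Pm] using h
    intro i
    have h1 := Pm_fwd M ν x h0 (i.1 + 1) i.2
    have h2 := Pm_fwd M ν x h0 i.1 (le_of_lt i.2)
    rw [Pm_succ M ν i.1 i.2, ← Matrix.mulVec_mulVec, h1, Fin.eta] at h2
    exact h2

noncomputable def Qv (v : Fin n → ℂ) (k : ℕ) : Fin n → ℂ :=
  (((List.ofFn M).drop k).prod).mulVec v

lemma Qv_ge (v : Fin n → ℂ) (k : ℕ) (hk : p ≤ k) : Qv M v k = v := by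
  unfold Qv
  rw [List.drop_eq_nil_of_le (by simpa using hk), List.prod_nil, Matrix.one_mulVec]

lemma Qv_succ (v : Fin n → ℂ) (k : ℕ) (hk : k < p) :
    Qv M v k = (M ⟨k, hk⟩).mulVec (Qv M v (k + 1)) := by
  unfold Qv
  rw [List.drop_eq_getElem_cons (by simpa using hk), List.prod_cons, List.getElem_ofFn,
    Matrix.mulVec_mulVec]

lemma eqn (x : Fin p × Fin n → ℂ) (h : ∀ i, (Nmat M ν i).mulVec x = x) (i : Fin p) (b : Fin n) :
    ∑ j : Fin p, (if j < i then ν * ((M j).mulVec (fun a => x (j,a)) b - x (j,b))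
      else if j = i then ν * (M i).mulVec (fun a => x (i,a)) b
      else ((M j).mulVec (fun a => x (j,a)) b - x (j,b))) = x (i, b) := by
  conv_rhs => rw [← h i]
  exact (row_eq M ν i x b).symm

lemma step1 (hν1 : ν ≠ 1) (x : Fin p × Fin n → ℂ) (h : ∀ i, (Nmat M ν i).mulVec x = x)
    (k : ℕ) (hk : k + 1 < p) :
    (M ⟨k+1, hk⟩).mulVec (fun a => x (⟨k+1, hk⟩, a)) = fun a => x (⟨k, by omega⟩, a) := by
  funext b
  have e1 := eqn M ν x h ⟨k, by omega⟩ b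
  have e2 := eqn M ν x h ⟨k+1, hk⟩ b
  have e3 : (∑ j : Fin p,
      ((if j < (⟨k+1, hk⟩ : Fin p) then ν * ((M j).mulVec (fun a => x (j,a)) b - x (j,b))
       else if j = ⟨k+1, hk⟩ then ν * (M ⟨k+1, hk⟩).mulVec (fun a => x (⟨k+1, hk⟩,a)) b
       else ((M j).mulVec (fun a => x (j,a)) b - x (j,b)))
      - (if j < (⟨k, by omega⟩ : Fin p) then ν * ((M j).mulVec (fun a => x (j,a)) b - x (j,b))
       else if j = ⟨k, by omega⟩ then ν * (M ⟨k, by omega⟩).mulVec (fun a => x (⟨k, by omega⟩,a)) b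
       else ((M j).mulVec (fun a => x (j,a)) b - x (j,b)))))
      = x (⟨k+1, hk⟩, b) - x (⟨k, by omega⟩, b) := by
    rw [Finset.sum_sub_distrib, e1, e2]
  have e4 : ∀ j : Fin p,
      ((if j < (⟨k+1, hk⟩ : Fin p) then ν * ((M j).mulVec (fun a => x (j,a)) b - x (j,b))
       else if j = ⟨k+1, hk⟩ then ν * (M ⟨k+1, hk⟩).mulVec (fun a => x (⟨k+1, hk⟩,a)) b
       else ((M j).mulVec (fun a => x (j,a)) b - x (j,b)))
      - (if j < (⟨k, by omega⟩ : Fin p) then ν * ((M j).mulVec (fun a => x (j,a)) b - x (j,b))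
       else if j = ⟨k, by omega⟩ then ν * (M ⟨k, by omega⟩).mulVec (fun a => x (⟨k, by omega⟩,a)) b
       else ((M j).mulVec (fun a => x (j,a)) b - x (j,b))))
      = (if j = (⟨k, by omega⟩ : Fin p) then -(ν * x (⟨k, by omega⟩, b)) else 0)
        + (if j = (⟨k+1, hk⟩ : Fin p) then
            (ν - 1) * (M ⟨k+1, hk⟩).mulVec (fun a => x (⟨k+1, hk⟩,a)) b + x (⟨k+1, hk⟩, b)
          else 0) := by
    intro j
    simp only [Fin.lt_def, Fin.ext_iff]
    rcases Nat.lt_trichotomy (j : ℕ) k with hj | hj | hj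
    · rw [if_pos (by omega), if_pos (by omega), if_neg (by omega), if_neg (by omega)]
      ring
    · rw [show j = ⟨k, by omega⟩ from Fin.ext hj]
      simp only [Fin.val_mk]
      split_ifs <;> first | omega | ring1
    · rcases Nat.lt_trichotomy (j : ℕ) (k+1) with hj2 | hj2 | hj2
      · omega
      · rw [show j = ⟨k+1, hk⟩ from Fin.ext hj2]
        simp only [Fin.val_mk]
        split_ifs <;> first | omega | ring1
      · rw [if_neg (by omega), if_neg (by omega), if_neg (by omega), if_neg (by omega),
          if_neg (by omega), if_neg (by omega)]
        ring
  rw [Finset.sum_congr rfl (fun j _ => e4 j), Finset.sum_add_distrib,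
    Finset.sum_ite_eq' Finset.univ, Finset.sum_ite_eq' Finset.univ] at e3
  simp only [Finset.mem_univ, if_pos] at e3
  have h3 : (ν - 1) * (M ⟨k+1, hk⟩).mulVec (fun a => x (⟨k+1, hk⟩,a)) b
      = (ν - 1) * x (⟨k, by omega⟩, b) := by linear_combination e3
  exact mul_left_cancel₀ (sub_ne_zero.2 hν1) h3

lemma step2 (hν1 : ν ≠ 1) (x : Fin p × Fin n → ℂ) (h : ∀ i, (Nmat M ν i).mulVec x = x)
    (hp : 0 < p) :
    ∀ t k (hk : k < p), p - 1 - k ≤ t →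
    (fun a => x (⟨k, hk⟩, a)) = Qv M (fun a => x (⟨p-1, by omega⟩, a)) (k+1) := by
  intro t
  induction t with
  | zero =>
    intro k hk h0
    have hk1 : k = p - 1 := by omega
    subst hk1
    rw [Qv_ge M _ (p-1+1) (by omega)]
  | succ t ih =>
    intro k hk h0
    by_cases hk1 : k = p - 1
    · subst hk1
      rw [Qv_ge M _ (p-1+1) (by omega)]
    · have hk2 : k + 1 < p := by omega
      have hs := step1 M ν hν1 x h k hk2
      rw [← hs, ih (k+1) hk2 (by omega), ← Qv_succ]

lemma step3 (hν1 : ν ≠ 1) (x : Fin p × Fin n → ℂ) (h : ∀ i, (Nmat M ν i).mulVec x = x)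
    (hp : 0 < p) (b : Fin n) :
    ν * Qv M (fun a => x (⟨p-1, by omega⟩, a)) 0 b = x (⟨p-1, by omega⟩, b) := by
  set v : Fin n → ℂ := fun a => x (⟨p-1, by omega⟩, a) with hvdef
  have hX : ∀ (j : Fin p) (a : Fin n), x (j, a) = Qv M v (j.1+1) a := by
    intro j a
    exact congrFun (step2 M ν hν1 x h hp p j.1 j.2 (by omega)) a
  have hblk : ∀ j : Fin p, (fun a => x (j, a)) = Qv M v (j.1+1) := by
    intro j; funext a; exact hX j a
  have hw : ∀ j : Fin p, (M j).mulVec (fun a => x (j, a)) b = Qv M v j.1 b := by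
    intro j
    rw [hblk j, Qv_succ M v j.1 j.2]
  have elast := eqn M ν x h ⟨p-1, by omega⟩ b
  have hconv : (∑ j : Fin p,
      (if j < (⟨p-1, by omega⟩ : Fin p) then ν * ((M j).mulVec (fun a => x (j,a)) b - x (j,b))
       else if j = ⟨p-1, by omega⟩ then
         ν * (M ⟨p-1, by omega⟩).mulVec (fun a => x (⟨p-1, by omega⟩,a)) b
       else ((M j).mulVec (fun a => x (j,a)) b - x (j,b))))
      = ∑ m ∈ Finset.range p,
        (fun m => if m = p-1 then ν * Qv M v (p-1) b
          else ν * (Qv M v m b - Qv M v (m+1) b)) m := by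
    rw [← Fin.sum_univ_eq_sum_range]
    refine Finset.sum_congr rfl fun j _ => ?_
    simp only [Fin.lt_def, Fin.ext_iff, Fin.val_mk]
    by_cases hj : (j : ℕ) = p - 1
    · rw [if_neg (by omega), if_pos hj, if_pos hj, hw ⟨p-1, by omega⟩]
    · rw [if_pos (by omega), if_neg hj, hw j, hX j b]
  rw [hconv] at elast
  have hsplit : (∑ m ∈ Finset.range p,
      (fun m => if m = p-1 then ν * Qv M v (p-1) b
        else ν * (Qv M v m b - Qv M v (m+1) b)) m)
      = (∑ m ∈ Finset.range (p-1),
          (fun m => if m = p-1 then ν * Qv M v (p-1) b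
            else ν * (Qv M v m b - Qv M v (m+1) b)) m)
        + (if p-1 = p-1 then ν * Qv M v (p-1) b
            else ν * (Qv M v (p-1) b - Qv M v (p-1+1) b)) := by
    rw [← Finset.sum_range_succ]
    exact Finset.sum_congr (congrArg Finset.range (by omega)) (fun _ _ => rfl)
  rw [hsplit, if_pos rfl] at elast
  have hsum2 : (∑ m ∈ Finset.range (p-1),
      (fun m => if m = p-1 then ν * Qv M v (p-1) b
        else ν * (Qv M v m b - Qv M v (m+1) b)) m)
      = ν * (Qv M v 0 b - Qv M v (p-1) b) := by
    rw [Finset.sum_congr rfl (fun m hm => if_neg (by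
      simp only [Finset.mem_range] at hm; omega)), ← Finset.mul_sum,
      Finset.sum_range_sub' (fun m => Qv M v m b)]
  rw [hsum2] at elast
  have hvb : x (⟨p-1, by omega⟩, b) = v b := rfl
  rw [hvb] at elast
  linear_combination elast

lemma v_fixes (v : Fin n → ℂ) (hv : ∀ b, ν * Qv M v 0 b = v b) (i : Fin p) :
    (Nmat M ν i).mulVec (fun q => Qv M v (q.1.1+1) q.2) = fun q => Qv M v (q.1.1+1) q.2 := by
  funext q
  by_cases hq : q.1 = i
  · obtain ⟨j, b⟩ := q
    obtain rfl : j = i := hq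
    rw [row_eq]
    show _ = Qv M v ((j : ℕ)+1) b
    have hw : ∀ j' : Fin p, (M j').mulVec (Qv M v (j'.1+1)) b = Qv M v j'.1 b := by
      intro j'; rw [Qv_succ M v j'.1 j'.2]
    trans (∑ j' : Fin p, (fun m : ℕ =>
        if m < (j : ℕ) then ν * (Qv M v m b - Qv M v (m+1) b)
        else if m = (j : ℕ) then ν * Qv M v m b
        else (Qv M v m b - Qv M v (m+1) b)) (j' : ℕ))
    · refine Finset.sum_congr rfl fun j' _ => ?_
      simp only [Fin.lt_def, Fin.ext_iff]
      rcases Nat.lt_trichotomy (j' : ℕ) (j : ℕ) with hj | hj | hj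
      · rw [if_pos hj, if_pos hj, hw j']
      · rw [hj, if_neg (lt_irrefl _), if_pos rfl, if_neg (lt_irrefl _), if_pos rfl, hw j]
      · rw [if_neg (by omega), if_neg (by omega), if_neg (by omega), if_neg (by omega), hw j']
    · rw [Fin.sum_univ_eq_sum_range (fun m : ℕ =>
          if m < (j : ℕ) then ν * (Qv M v m b - Qv M v (m+1) b)
          else if m = (j : ℕ) then ν * Qv M v m b
          else (Qv M v m b - Qv M v (m+1) b)) p]
      have hEsplit : ∀ m ∈ Finset.range p, (fun m : ℕ =>
          if m < (j : ℕ) then ν * (Qv M v m b - Qv M v (m+1) b)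
          else if m = (j : ℕ) then ν * Qv M v m b
          else (Qv M v m b - Qv M v (m+1) b)) m
          = ν * (Qv M v m b - Qv M v (m+1) b)
            + ((if m = (j : ℕ) then ν * Qv M v (m+1) b else 0)
              + (if (j : ℕ) < m then (1 - ν) * (Qv M v m b - Qv M v (m+1) b) else 0)) := by
        intro m _
        simp only
        split_ifs <;> first | omega | ring1
      rw [Finset.sum_congr rfl hEsplit, Finset.sum_add_distrib, Finset.sum_add_distrib,
        ← Finset.mul_sum, Finset.sum_range_sub' (fun m => Qv M v m b),
        Finset.sum_ite_eq' (Finset.range p) (j : ℕ),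
        if_pos (Finset.mem_range.2 j.2)]
      have hC : (∑ m ∈ Finset.range p,
          (if (j : ℕ) < m then (1 - ν) * (Qv M v m b - Qv M v (m+1) b) else 0))
          = (1 - ν) * ((Qv M v 0 b - Qv M v p b) - (Qv M v 0 b - Qv M v ((j:ℕ)+1) b)) := by
        rw [← Finset.sum_filter]
        have hfil : (Finset.range p).filter (fun m => (j : ℕ) < m)
            = Finset.Ico ((j:ℕ)+1) p := by
          ext m
          simp only [Finset.mem_filter, Finset.mem_Ico, Finset.mem_range]
          omega
        rw [hfil, ← Finset.mul_sum,
          Finset.sum_Ico_eq_sub _ (by omega : (j:ℕ)+1 ≤ p),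
          Finset.sum_range_sub' (fun m => Qv M v m b),
          Finset.sum_range_sub' (fun m => Qv M v m b)]
      rw [hC]
      have hGp : Qv M v p b = v b := congrFun (Qv_ge M v p le_rfl) b
      rw [hGp]
      linear_combination hv b
  · exact row_ne M ν i _ q hq

lemma exists_v (hν1 : ν ≠ 1) (x : Fin p × Fin n → ℂ)
    (h : ∀ i, (Nmat M ν i).mulVec x = x) :
    ∃ v : Fin n → ℂ, (∀ b, ν * Qv M v 0 b = v b)
      ∧ x = fun q => Qv M v ((q.1 : ℕ)+1) q.2 := by
  rcases Nat.eq_zero_or_pos p with hp | hp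
  · refine ⟨0, ?_, ?_⟩
    · intro b; simp [Qv, Matrix.mulVec_zero]
    · funext q; exact absurd q.1.2 (by omega)
  · refine ⟨fun a => x (⟨p-1, by omega⟩, a), fun b => step3 M ν hν1 x h hp b, ?_⟩
    funext q
    obtain ⟨j, a⟩ := q
    exact congrFun (step2 M ν hν1 x h hp p j.1 j.2 (by omega)) a

theorem stmt13 (p n : ℕ) (M : Fin p → Matrix (Fin n) (Fin n) ℂ) (ν : ℂ)
    (hν0 : ν ≠ 0) (hν1 : ν ≠ 1) (hM : ∀ i, IsUnit (M i)) :
    let N : Fin p → Matrix (Fin p × Fin n) (Fin p × Fin n) ℂ := fun i =>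
      Matrix.of fun q q' =>
        if q.1 = i then
          (if q'.1 < i then ν * (M q'.1 q.2 q'.2 - (if q.2 = q'.2 then 1 else 0))
           else if q'.1 = i then ν * M i q.2 q'.2
           else M q'.1 q.2 q'.2 - (if q.2 = q'.2 then 1 else 0))
        else (if q = q' then 1 else 0)
    ({x : Fin p × Fin n → ℂ | ∀ i, (N i).mulVec x = x} =
      {x : Fin p × Fin n → ℂ | ((List.ofFn N).prod).mulVec x = x}) ∧
    ({x : Fin p × Fin n → ℂ | ∀ i, (N i).mulVec x = x} =
      {x : Fin p × Fin n → ℂ | ∃ v : Fin n → ℂ,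
        ν • ((List.ofFn M).prod).mulVec v = v ∧
        x = fun q => (((List.ofFn M).drop ((q.1 : ℕ) + 1)).prod).mulVec v q.2}) := by
  intro N
  have hN : N = Nmat M ν := rfl
  constructor
  · ext x
    simp only [Set.mem_setOf_eq, hN]
    exact fixed_iff M ν x
  · ext x
    simp only [Set.mem_setOf_eq, hN]
    constructor
    · intro h
      obtain ⟨v, hv, hx⟩ := exists_v M ν hν1 x h
      refine ⟨v, ?_, hx⟩
      funext b
      have h2 := hv b
      rw [Qv, List.drop_zero] at h2
      simpa using h2
    · rintro ⟨v, hv, rfl⟩ i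
      have hv' : ∀ b, ν * Qv M v 0 b = v b := by
        intro b
        have h2 := congrFun hv b
        rw [Qv, List.drop_zero]
        simpa using h2
      exact v_fixes M ν v hv' i
end

section
/- Each N_i of the multiplicative convolution (the identity except in its i-th block row, which is (ν(M₁−𝟙), …, ν(M_{i−1}−𝟙), νM_i, M_{i+1}−𝟙, …, M_p−𝟙)) is invertible whenever M_i is invertible and ν ≠ 0, and the subspaces K_i = {(0,…,0,w,0,…,0) : w ∈ ker(M_i − 𝟙)} (w in slot i) satisfy N_j(K_i) ⊆ K_i + K_j for every j. -/
open Matrix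

theorem stmt14 (p n : ℕ) (M : Fin p → Matrix (Fin n) (Fin n) ℂ) (ν : ℂ) (hν : ν ≠ 0) :
    let N : Fin p → Matrix (Fin p × Fin n) (Fin p × Fin n) ℂ := fun i =>
      Matrix.of fun q q' =>
        if q.1 = i then
          (if q'.1 < i then ν * (M q'.1 q.2 q'.2 - (if q.2 = q'.2 then 1 else 0))
           else if q'.1 = i then ν * M i q.2 q'.2
           else M q'.1 q.2 q'.2 - (if q.2 = q'.2 then 1 else 0))
        else (if q = q' then 1 else 0)
    let K : Fin p → Set (Fin p × Fin n → ℂ) := fun i =>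
      {x | (∀ q : Fin p × Fin n, q.1 ≠ i → x q = 0) ∧
           (M i).mulVec (fun r => x (i, r)) = fun r => x (i, r)}
    (∀ i, IsUnit (M i) → IsUnit (N i)) ∧
    (∀ j i, ∀ x ∈ K i, ∃ y ∈ K i, ∃ z ∈ K j, (N j).mulVec x = y + z) := by
  intro N K
  -- rows off block j act as identity
  have hrow : ∀ (j : Fin p) (x : Fin p × Fin n → ℂ) (q : Fin p × Fin n), q.1 ≠ j →
      (N j).mulVec x q = x q := by
    intro j x q hq
    show ∑ q' : Fin p × Fin n, (N j) q q' * x q' = x q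
    simp only [N, Matrix.of_apply, if_neg hq, ite_mul, one_mul, zero_mul]
    simp
  -- row j applied to a vector supported on block i
  have hsum : ∀ (j i : Fin p) (x : Fin p × Fin n → ℂ),
      (∀ q : Fin p × Fin n, q.1 ≠ i → x q = 0) →
      ∀ r : Fin n, (N j).mulVec x (j, r) = ∑ s, (N j) (j, r) (i, s) * x (i, s) := by
    intro j i x hx r
    show ∑ q' : Fin p × Fin n, (N j) (j, r) q' * x q' = _
    rw [Fintype.sum_prod_type]
    refine Finset.sum_eq_single i (fun k _ hk => ?_) (by simp)
    exact Finset.sum_eq_zero fun s _ => by rw [hx (k, s) hk, mul_zero]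
  have hdelta : ∀ (x : Fin n → ℂ) (r : Fin n),
      ∑ s, (if r = s then (1:ℂ) else 0) * x s = x r := by
    intro x r; simp [ite_mul]
  constructor
  · intro i hMi
    rw [Matrix.isUnit_iff_isUnit_det, isUnit_iff_ne_zero]
    intro hdet
    rw [← Matrix.exists_mulVec_eq_zero_iff] at hdet
    obtain ⟨v, hv0, hv⟩ := hdet
    apply hv0
    have hoff : ∀ q : Fin p × Fin n, q.1 ≠ i → v q = 0 := by
      intro q hq
      rw [← hrow i v q hq, hv]; rfl
    have hblock : ∀ r, (M i).mulVec (fun s => v (i, s)) r = 0 := by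
      intro r
      have h1 := hsum i i v hoff r
      rw [show (N i).mulVec v (i, r) = 0 from congrFun hv _] at h1
      have h2 : ∀ s, (N i) (i, r) (i, s) = ν * M i r s := by
        intro s
        simp [N, lt_irrefl]
      simp only [h2, mul_assoc] at h1
      rw [← Finset.mul_sum] at h1
      have := (mul_eq_zero.mp h1.symm).resolve_left hν
      simpa [Matrix.mulVec, dotProduct] using this
    have hvi : ∀ s, v (i, s) = 0 := by
      by_contra h
      push_neg at h
      obtain ⟨s, hs⟩ := h
      have : (M i).det = 0 := by
        rw [← Matrix.exists_mulVec_eq_zero_iff]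
        exact ⟨fun s => v (i, s), fun hz => hs (congrFun hz s), funext hblock⟩
      exact (Matrix.isUnit_iff_isUnit_det _ |>.mp hMi).ne_zero this
    funext q
    by_cases hq : q.1 = i
    · obtain ⟨q1, q2⟩ := q
      simp only at hq
      subst hq
      exact hvi q2
    · exact hoff q hq
  · intro j i x hx
    have hzero : (0 : Fin p × Fin n → ℂ) ∈ K j := by
      constructor
      · intro q _; rfl
      · funext r; simp [Matrix.mulVec]
    by_cases hji : j = i
    · subst hji
      refine ⟨ν • x, ?_, 0, hzero, ?_⟩
      · refine ⟨fun q hq => by simp [hx.1 q hq], ?_⟩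
        funext r
        have h := congrFun hx.2 r
        simp only [Matrix.mulVec, dotProduct] at h
        simp only [Pi.smul_apply, smul_eq_mul, Matrix.mulVec, dotProduct]
        simp only [mul_left_comm _ ν]
        rw [← Finset.mul_sum, h]
      · funext q
        by_cases hq : q.1 = j
        · have hq' : q = (j, q.2) := Prod.ext hq rfl
          rw [hq', hsum j j x hx.1 q.2]
          have h2 : ∀ s, (N j) (j, q.2) (j, s) = ν * M j q.2 s := by
            intro s; simp [N, lt_irrefl]
          simp only [h2, mul_assoc]
          rw [← Finset.mul_sum]
          have h := congrFun hx.2 q.2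
          simp only [Matrix.mulVec, dotProduct] at h
          rw [h]
          simp
        · rw [hrow j x q hq]
          simp [hx.1 q hq]
    · refine ⟨x, hx, 0, hzero, ?_⟩
      funext q
      by_cases hq : q.1 = j
      · have hq' : q = (j, q.2) := Prod.ext hq rfl
        rw [hq', hsum j i x hx.1 q.2]
        have hij : i ≠ j := fun h => hji h.symm
        have hkey : ∑ s, (M i q.2 s - (if q.2 = s then (1:ℂ) else 0)) * x (i, s) = 0 := by
          have h := congrFun hx.2 q.2
          simp only [Matrix.mulVec, dotProduct] at h
          simp only [sub_mul, Finset.sum_sub_distrib, h, hdelta (fun s => x (i, s)) q.2]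
          simp
        have hx0 : x (j, q.2) = 0 := hx.1 (j, q.2) (by simpa using hij.symm)
        by_cases hlt : i < j
        · have h2 : ∀ s, (N j) (j, q.2) (i, s) = ν * (M i q.2 s - (if q.2 = s then 1 else 0)) := by
            intro s; simp [N, hlt]
          simp only [h2, mul_assoc]
          rw [← Finset.mul_sum, hkey]
          simp [hx0]
        · have h2 : ∀ s, (N j) (j, q.2) (i, s) = M i q.2 s - (if q.2 = s then 1 else 0) := by
            intro s; simp [N, hlt, hij]
          simp only [h2]
          rw [hkey]
          simp [hx0]
      · rw [hrow j x q hq]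
        simp
end

section
/- Let ν ∈ ℂ* and let the rescaled monodromy matrices over variables (x,y,z) with q_k = exp(2πiθ_k) be M̂₁ = [[0, q₁x⁻¹],[−x, 1+q₁]], M̂₂ = [[1+q₂+q₂y⁻¹, 1+q₂+q₂y⁻¹+y],[−q₂y⁻¹, −q₂y⁻¹]], M̂₃ = [[1+q₃+z, z],[−1−q₃−q₃z⁻¹−z, −z]]. Then the vector v = (−yz, 0, z, −z, 0, 1)ᵀ satisfies (M̂₂M̂₃w, M̂₃w, w) = v for w = (0,1)ᵀ, and w is an eigenvector of M̂∞ := (M̂₁M̂₂M̂₃)⁻¹ with eigenvalue (xyz)⁻¹. -/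
open Matrix Complex

private lemma aux15 (x y z a b c : ℂ) (hx : x ≠ 0) (hy : y ≠ 0) (hz : z ≠ 0)
    (ha : a ≠ 0) (hb : b ≠ 0) (hc : c ≠ 0) :
    y ^ 6 * x ^ 4 * z ^ 2 * a * b * c * y⁻¹ ^ 6 * x⁻¹ ^ 4 * z⁻¹ ^ 2 * a⁻¹ * b⁻¹ * c⁻¹ = 1 := by
  field_simp

theorem stmt15 (θ₁ θ₂ θ₃ : ℂ) (x y z : ℂ) (hx : x ≠ 0) (hy : y ≠ 0) (hz : z ≠ 0) :
    let q₁ : ℂ := Complex.exp (2 * Real.pi * Complex.I * θ₁)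
    let q₂ : ℂ := Complex.exp (2 * Real.pi * Complex.I * θ₂)
    let q₃ : ℂ := Complex.exp (2 * Real.pi * Complex.I * θ₃)
    let M₁ : Matrix (Fin 2) (Fin 2) ℂ := !![0, q₁ * x⁻¹; -x, 1 + q₁]
    let M₂ : Matrix (Fin 2) (Fin 2) ℂ :=
      !![1 + q₂ + q₂ * y⁻¹, 1 + q₂ + q₂ * y⁻¹ + y; -(q₂ * y⁻¹), -(q₂ * y⁻¹)]
    let M₃ : Matrix (Fin 2) (Fin 2) ℂ :=
      !![1 + q₃ + z, z; -(1 + q₃ + q₃ * z⁻¹ + z), -z]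
    let w : Fin 2 → ℂ := ![0, 1]
    -- the stacked vector (M₂M₃w, M₃w, w) equals (-yz, 0, z, -z, 0, 1)ᵀ
    (M₂ * M₃).mulVec w = ![-(y * z), 0] ∧
    M₃.mulVec w = ![z, -z] ∧
    -- w is an eigenvector of M∞ = (M₁M₂M₃)⁻¹ with eigenvalue (xyz)⁻¹
    ((M₁ * M₂ * M₃)⁻¹).mulVec w = (x * y * z)⁻¹ • w := by
  intro q₁ q₂ q₃ M₁ M₂ M₃ w
  have hq₁ : q₁ ≠ 0 := Complex.exp_ne_zero _
  have hq₂ : q₂ ≠ 0 := Complex.exp_ne_zero _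
  have hq₃ : q₃ ≠ 0 := Complex.exp_ne_zero _
  refine ⟨?_, ?_, ?_⟩
  · show (M₂ * M₃).mulVec ![0,1] = _
    simp only [M₂, M₃, Matrix.mul_fin_two]
    ext i
    fin_cases i <;>
      simp [Matrix.mulVec, dotProduct, Fin.sum_univ_two] <;>
      field_simp <;> ring
  · show M₃.mulVec ![0,1] = _
    ext i
    fin_cases i <;> simp [M₃, Matrix.mulVec, dotProduct, Fin.sum_univ_two]
  · show ((M₁ * M₂ * M₃)⁻¹).mulVec ![0,1] = _
    simp only [M₁, M₂, M₃, Matrix.mul_fin_two]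
    rw [Matrix.inv_def]
    ext i
    fin_cases i
    · simp [Matrix.adjugate_fin_two, Matrix.det_fin_two, Matrix.mulVec,
        dotProduct, Fin.sum_univ_two, Ring.inverse_eq_inv', w, hx, hy, hz]
    · simp only [Matrix.adjugate_fin_two, Matrix.det_fin_two, Matrix.mulVec,
        dotProduct, Fin.sum_univ_two, Ring.inverse_eq_inv', w]
      simp [hx, hy, hz]
      rw [show ((-(x * (1 + q₂ + q₂ * y⁻¹)) + -((1 + q₁) * (q₂ * y⁻¹))) * z +
            -((-(x * (1 + q₂ + q₂ * y⁻¹ + y)) + -((1 + q₁) * (q₂ * y⁻¹))) * z)) = x * y * z from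
          by ring,
        show (-(q₁ * x⁻¹ * (q₂ * y⁻¹) * (1 + q₃ + z)) +
            -(q₁ * x⁻¹ * (q₂ * y⁻¹) * (-z + (-(q₃ * z⁻¹) + (-q₃ + -1))))) =
            q₁ * q₂ * q₃ * (x⁻¹ * y⁻¹ * z⁻¹) from by ring]
      have hB : q₁ * q₂ * q₃ * (x⁻¹ * y⁻¹ * z⁻¹) ≠ 0 := by
        simp [hq₁, hq₂, hq₃, hx, hy, hz]
      rw [inv_mul_cancel_right₀ hB, mul_inv, mul_inv]
      ring
end

section
/- With q_k = exp(2πiθ_k) and cluster coordinates (x,y,z), the transformed monodromy matrices M̃₁, M̃₂, M̃₃ of the middle convolution realization of w₂ (e.g. M̃₁ = [[0, q₁(1+z+xz)/(xz(1+x+xy))],[−(1+x+xy)/(y(1+z+xz)), 1 + q₁/(xyz)]]) satisfy det(M̃_k) = q_k/(xyz) and tr(M̃_k) = 1 + q_k/(xyz), so that the eigenvalues of M̃_k are {1, q_k/(xyz)} for k = 1, 2, 3. -/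
/-!
Write `O = 1 + x + x y`, `B = 1 + y + y z`, `G = 1 + z + x z` for the three cluster
expressions. Once the matrix entries are put over a common denominator, every determinant and
trace reduces to one of the two relations `(1 + y) G - z O = B` and `(1 + z) O - G = x B`
among them, after which the factor `B` cancels.
-/

open Matrix

section

variable {K : Type*} [Field K] (q x y z : K)

theorem one_add_mul_clusterG_sub :
    (1 + y) * (1 + z + x * z) - z * (1 + x + x * y) = 1 + y + y * z := by
  ring

theorem one_add_mul_clusterO_sub :
    (1 + z) * (1 + x + x * y) - (1 + z + x * z) = x * (1 + y + y * z) := by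
  ring

def convolvedMonodromy₁ : Matrix (Fin 2) (Fin 2) K :=
  !![0, q * (1 + z + x * z) / (x * z * (1 + x + x * y));
     -((1 + x + x * y) / (y * (1 + z + x * z))), 1 + q / (x * y * z)]

def convolvedMonodromy₂ : Matrix (Fin 2) (Fin 2) K :=
  !![1 + q * (1 + y) * (1 + z + x * z) / (x * y * z * (1 + y + y * z)),
     ((1 + y) * (1 + z + x * z) / z) *
       (q / (x * y * (1 + y + y * z)) + 1 / (1 + x + x * y));
     -(q * (1 + x + x * y) / (x * y * (1 + y + y * z))),
     -(q * (1 + x + x * y) / (x * y * (1 + y + y * z)))]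

def convolvedMonodromy₃ : Matrix (Fin 2) (Fin 2) K :=
  !![q / (x * y * z) + (1 + z) * (1 + x + x * y) / (x * (1 + y + y * z)),
     (1 + z + x * z) / (x * (1 + y + y * z));
     -((1 + z) * (1 + x + x * y) *
         (q * (1 + y + y * z) + y * z * (1 + z + x * z)) /
       (x * y * z * (1 + y + y * z) * (1 + z + x * z))),
     -((1 + z + x * z) / (x * (1 + y + y * z)))]

theorem det_convolvedMonodromy₁ (hO : 1 + x + x * y ≠ 0) (hG : 1 + z + x * z ≠ 0) :
    (convolvedMonodromy₁ q x y z).det = q / (x * y * z) := by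
  rw [convolvedMonodromy₁, det_fin_two_of]
  field_simp
  ring

theorem trace_convolvedMonodromy₁ :
    (convolvedMonodromy₁ q x y z).trace = 1 + q / (x * y * z) := by
  rw [convolvedMonodromy₁, trace_fin_two_of, zero_add]

theorem det_convolvedMonodromy₂ (hy : y ≠ 0) (hz : z ≠ 0)
    (hO : 1 + x + x * y ≠ 0) (hB : 1 + y + y * z ≠ 0) :
    (convolvedMonodromy₂ q x y z).det = q / (x * y * z) := by
  calc (convolvedMonodromy₂ q x y z).det
      = q * ((1 + y) * (1 + z + x * z) - z * (1 + x + x * y)) /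
          (x * y * z * (1 + y + y * z)) := by
        -- `field_simp` commutes `x * y` to `y * x` and would not find `hO` otherwise
        have hO' : 1 + x + y * x ≠ 0 := by rwa [mul_comm y x]
        rw [convolvedMonodromy₂, det_fin_two_of]
        field_simp
        ring
    _ = q / (x * y * z) := by
        rw [one_add_mul_clusterG_sub, mul_div_mul_right _ _ hB]

theorem trace_convolvedMonodromy₂ (hy : y ≠ 0) (hz : z ≠ 0)
    (hB : 1 + y + y * z ≠ 0) :
    (convolvedMonodromy₂ q x y z).trace = 1 + q / (x * y * z) := by
  calc (convolvedMonodromy₂ q x y z).trace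
      = 1 + q * ((1 + y) * (1 + z + x * z) - z * (1 + x + x * y)) /
          (x * y * z * (1 + y + y * z)) := by
        rw [convolvedMonodromy₂, trace_fin_two_of]
        field_simp
        ring
    _ = 1 + q / (x * y * z) := by
        rw [one_add_mul_clusterG_sub, mul_div_mul_right _ _ hB]

theorem det_convolvedMonodromy₃ (hy : y ≠ 0) (hz : z ≠ 0)
    (hB : 1 + y + y * z ≠ 0) (hG : 1 + z + x * z ≠ 0) :
    (convolvedMonodromy₃ q x y z).det = q / (x * y * z) := by
  calc (convolvedMonodromy₃ q x y z).det
      = q * ((1 + z) * (1 + x + x * y) - (1 + z + x * z)) /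
          (x * (x * y * z * (1 + y + y * z))) := by
        rw [convolvedMonodromy₃, det_fin_two_of]
        field_simp
        ring
    _ = q / (x * y * z) := by
        rw [one_add_mul_clusterO_sub]
        field_simp

theorem trace_convolvedMonodromy₃ (hx : x ≠ 0) (hB : 1 + y + y * z ≠ 0) :
    (convolvedMonodromy₃ q x y z).trace = 1 + q / (x * y * z) := by
  calc (convolvedMonodromy₃ q x y z).trace
      = q / (x * y * z) +
          ((1 + z) * (1 + x + x * y) - (1 + z + x * z)) / (x * (1 + y + y * z)) := by
        rw [convolvedMonodromy₃, trace_fin_two_of]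
        ring
    _ = 1 + q / (x * y * z) := by
        rw [one_add_mul_clusterO_sub, div_self (mul_ne_zero hx hB), add_comm]

end

theorem stmt16 (θ₁ θ₂ θ₃ : ℂ) (x y z : ℂ) (hx : x ≠ 0) (hy : y ≠ 0) (hz : z ≠ 0)
    (hO : 1 + x + x * y ≠ 0) (hB : 1 + y + y * z ≠ 0) (hG : 1 + z + x * z ≠ 0) :
    let q₁ : ℂ := Complex.exp (2 * Real.pi * Complex.I * θ₁)
    let q₂ : ℂ := Complex.exp (2 * Real.pi * Complex.I * θ₂)
    let q₃ : ℂ := Complex.exp (2 * Real.pi * Complex.I * θ₃)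
    let M₁ : Matrix (Fin 2) (Fin 2) ℂ :=
      !![0, q₁ * (1 + z + x * z) / (x * z * (1 + x + x * y));
         -((1 + x + x * y) / (y * (1 + z + x * z))), 1 + q₁ / (x * y * z)]
    let M₂ : Matrix (Fin 2) (Fin 2) ℂ :=
      !![1 + q₂ * (1 + y) * (1 + z + x * z) / (x * y * z * (1 + y + y * z)),
         ((1 + y) * (1 + z + x * z) / z) *
           (q₂ / (x * y * (1 + y + y * z)) + 1 / (1 + x + x * y));
         -(q₂ * (1 + x + x * y) / (x * y * (1 + y + y * z))),
         -(q₂ * (1 + x + x * y) / (x * y * (1 + y + y * z)))]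
    let M₃ : Matrix (Fin 2) (Fin 2) ℂ :=
      !![q₃ / (x * y * z) + (1 + z) * (1 + x + x * y) / (x * (1 + y + y * z)),
         (1 + z + x * z) / (x * (1 + y + y * z));
         -((1 + z) * (1 + x + x * y) *
             (q₃ * (1 + y + y * z) + y * z * (1 + z + x * z)) /
           (x * y * z * (1 + y + y * z) * (1 + z + x * z))),
         -((1 + z + x * z) / (x * (1 + y + y * z)))]
    (M₁.det = q₁ / (x * y * z) ∧ M₁.trace = 1 + q₁ / (x * y * z)) ∧
    (M₂.det = q₂ / (x * y * z) ∧ M₂.trace = 1 + q₂ / (x * y * z)) ∧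
    (M₃.det = q₃ / (x * y * z) ∧ M₃.trace = 1 + q₃ / (x * y * z)) := by
  intro q₁ q₂ q₃ M₁ M₂ M₃
  exact ⟨⟨det_convolvedMonodromy₁ q₁ x y z hO hG, trace_convolvedMonodromy₁ q₁ x y z⟩,
    ⟨det_convolvedMonodromy₂ q₂ x y z hy hz hO hB,
      trace_convolvedMonodromy₂ q₂ x y z hy hz hB⟩,
    ⟨det_convolvedMonodromy₃ q₃ x y z hy hz hB hG,
      trace_convolvedMonodromy₃ q₃ x y z hx hB⟩⟩
end
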